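/- Littlewood–Paley block variance bound in homogenization: let d ≥ 1, β ∈ (0, d], and let R̃ : ℝ^d → [0,∞) be a radial Schwartz function; set R(k) = |k|^{β−d} R̃(k) for k ≠ 0. Let ρ ∈ C^∞(ℝ^d) be nonnegative and supported in an annulus {a ≤ |x| ≤ b} with 0 < a < b. Let α ≥ 0 satisfy β − 2α ≥ 0. Then for every κ with 0 ≤ κ ≤ β − 2α there exists a constant C (depending on ρ, R̃, d, β, α, κ) such that for all ε > 0 and all integers i ≥ 0, ε^{d−2α} Σ_{k ∈ εℤ^d, k ≠ 0} ρ(k/(ε 2^i))² R(k) ≤ C 2^{(2α+κ)i} ε^κ. -/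

import Mathlib

open scoped BigOperators

set_option maxHeartbeats 1000000

private lemma lp_abs_le (x b : ℝ) (hb : 0 ≤ b) (h : x ^ 2 ≤ b ^ 2) : |x| ≤ b := by
  calc |x| = Real.sqrt (x ^ 2) := (Real.sqrt_sq_eq_abs x).symm
    _ ≤ Real.sqrt (b ^ 2) := Real.sqrt_le_sqrt h
    _ = b := Real.sqrt_sq hb

private lemma lp_alg (d : ℕ) (β α κ e ε p : ℝ) (hε : 0 < ε) (hp : 0 < p) :
    ε ^ ((d:ℝ) - 2*α) * p ^ ((d:ℝ)) * (ε*p) ^ (β - (d:ℝ) + e)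
      = (ε*p) ^ (β - 2*α + e - κ) * (ε ^ κ * p ^ (2*α+κ)) := by
  rw [Real.mul_rpow hε.le hp.le, Real.mul_rpow hε.le hp.le]
  calc ε ^ ((d:ℝ)-2*α) * p^((d:ℝ)) * (ε^(β-(d:ℝ)+e) * p^(β-(d:ℝ)+e))
      = (ε^((d:ℝ)-2*α) * ε^(β-(d:ℝ)+e)) * (p^((d:ℝ)) * p^(β-(d:ℝ)+e)) := by ring
    _ = ε^(((d:ℝ)-2*α) + (β-(d:ℝ)+e)) * p^((d:ℝ) + (β-(d:ℝ)+e)) := by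
        rw [← Real.rpow_add hε, ← Real.rpow_add hp]
    _ = ε^((β-2*α+e-κ) + κ) * p^((β-2*α+e-κ) + (2*α+κ)) := by
        rw [show ((d:ℝ)-2*α) + (β-(d:ℝ)+e) = (β-2*α+e-κ) + κ by ring,
          show (d:ℝ) + (β-(d:ℝ)+e) = (β-2*α+e-κ) + (2*α+κ) by ring]
    _ = (ε^(β-2*α+e-κ) * p^(β-2*α+e-κ)) * (ε^κ * p^(2*α+κ)) := by
        rw [Real.rpow_add hε, Real.rpow_add hp]; ring

/-- **Littlewood–Paley block variance bound in homogenization.**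
Let `d ≥ 1`, `β ∈ (0, d]`, and let `R̃ : ℝ^d → [0,∞)` be a radial Schwartz function; set
`R(k) = |k|^{β−d} R̃(k)` for `k ≠ 0`.  Let `ρ ∈ C^∞(ℝ^d)` be nonnegative and supported in an
annulus `{a ≤ |x| ≤ b}` with `0 < a < b`.  Let `α ≥ 0` satisfy `β − 2α ≥ 0`.  Then for every
`κ` with `0 ≤ κ ≤ β − 2α` there is a constant `C > 0` such that for all `ε > 0` and all
integers `i ≥ 0`,
`ε^{d−2α} ∑_{k ∈ εℤ^d, k ≠ 0} ρ(k/(ε 2^i))² R(k) ≤ C 2^{(2α+κ)i} ε^κ`. -/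
theorem lp_block_variance_bound
    (d : ℕ) (hd : 1 ≤ d) (β : ℝ) (hβ0 : 0 < β) (hβd : β ≤ (d : ℝ))
    (Rt : SchwartzMap (Fin d → ℝ) ℝ)
    (hRtnn : ∀ x, 0 ≤ Rt x)
    (hRtrad : ∀ x y : Fin d → ℝ, (∑ i, x i ^ 2) = (∑ i, y i ^ 2) → Rt x = Rt y)
    (R : (Fin d → ℝ) → ℝ)
    (hR : ∀ k : Fin d → ℝ, k ≠ 0 → R k = Real.sqrt (∑ i, k i ^ 2) ^ (β - (d : ℝ)) * Rt k)
    (ρ : (Fin d → ℝ) → ℝ) (hρsm : ContDiff ℝ (⊤ : ℕ∞) ρ) (hρnn : ∀ x, 0 ≤ ρ x)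
    (a b : ℝ) (ha : 0 < a) (hab : a < b)
    (hsupp : ∀ x, ρ x ≠ 0 → a ^ 2 ≤ ∑ i, x i ^ 2 ∧ (∑ i, x i ^ 2) ≤ b ^ 2)
    (α : ℝ) (hα : 0 ≤ α) (hβα : 0 ≤ β - 2 * α)
    (κ : ℝ) (hκ0 : 0 ≤ κ) (hκ : κ ≤ β - 2 * α) :
    ∃ C : ℝ, 0 < C ∧ ∀ ε : ℝ, 0 < ε → ∀ i : ℕ,
      ε ^ ((d : ℝ) - 2 * α) *
        (∑' m : Fin d → ℤ, if m ≠ 0 then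
            ρ (fun j => (ε * (m j : ℝ)) / (ε * 2 ^ i)) ^ 2 * R (fun j => ε * (m j : ℝ))
          else 0)
        ≤ C * (2 : ℝ) ^ ((2 * α + κ) * (i : ℝ)) * ε ^ κ := by
  have hb : 0 < b := ha.trans hab
  have hdpos : (0:ℝ) < (d:ℝ) := by exact_mod_cast hd
  -- bound on ρ
  obtain ⟨Mρ, hMρ1, hMρ⟩ : ∃ Mρ : ℝ, 1 ≤ Mρ ∧ ∀ x, ρ x ≤ Mρ := by
    have hcs : HasCompactSupport ρ := by
      have hsub : tsupport ρ ⊆ Metric.closedBall (0 : Fin d → ℝ) b := by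
        apply closure_minimal _ Metric.isClosed_closedBall
        intro x hx
        have h := (hsupp x hx).2
        rw [Metric.mem_closedBall, dist_zero_right, pi_norm_le_iff_of_nonneg hb.le]
        intro j
        have h1 : x j ^ 2 ≤ ∑ i, x i ^ 2 :=
          Finset.single_le_sum (f := fun i => x i ^ 2) (fun i _ => sq_nonneg _) (Finset.mem_univ j)
        simpa [Real.norm_eq_abs] using lp_abs_le (x j) b hb.le (by linarith)
      exact IsCompact.of_isClosed_subset (isCompact_closedBall _ _) (isClosed_tsupport ρ) hsub
    obtain ⟨x₀, hx₀⟩ := hρsm.continuous.exists_forall_ge_of_hasCompactSupport hcs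
    exact ⟨max (ρ x₀) 1, le_max_right _ _, fun x => (hx₀ x).trans (le_max_left _ _)⟩
  -- Schwartz bounds
  obtain ⟨C0, hC01, hC0⟩ : ∃ C0 : ℝ, 1 ≤ C0 ∧ ∀ x, Rt x ≤ C0 := by
    obtain ⟨C, -, hC⟩ := Rt.decay 0 0
    refine ⟨max C 1, le_max_right _ _, fun x => ?_⟩
    have := hC x
    simp only [pow_zero, one_mul, norm_iteratedFDeriv_zero] at this
    exact le_trans (le_abs_self _) (le_trans this (le_max_left _ _))
  obtain ⟨Cd, hCd1, hCd⟩ : ∃ Cd : ℝ, 1 ≤ Cd ∧ ∀ x : Fin d → ℝ, ‖x‖ ^ d * |Rt x| ≤ Cd := by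
    obtain ⟨C, -, hC⟩ := Rt.decay d 0
    refine ⟨max C 1, le_max_right _ _, fun x => ?_⟩
    have := hC x
    simp only [norm_iteratedFDeriv_zero, Real.norm_eq_abs] at this
    exact le_trans this (le_max_left _ _)
  set q : ℝ := Real.sqrt d with hq_def
  have hq : 0 < q := Real.sqrt_pos.2 hdpos
  set K1 : ℝ := (2*b+3)^d * (Mρ^2 * (a ^ (β-(d:ℝ)) * C0)) with hK1_def
  set K2 : ℝ := (2*b+3)^d * (Mρ^2 * (a ^ (β-(d:ℝ)) * (Cd * (q/a)^d))) with hK2_def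
  have hK1 : 0 < K1 := by
    have := Real.rpow_pos_of_pos ha (β-(d:ℝ)); positivity
  have hK2 : 0 < K2 := by
    have := Real.rpow_pos_of_pos ha (β-(d:ℝ)); positivity
  refine ⟨K1 + K2, by positivity, fun ε hε i => ?_⟩
  set p : ℝ := (2:ℝ)^i with hp_def
  have hp : 0 < p := by positivity
  have hp1 : 1 ≤ p := one_le_pow₀ (by norm_num)
  set t : ℝ := ε * p with ht_def
  have ht : 0 < t := mul_pos hε hp
  -- rewrite the argument of ρ
  have harg : ∀ m : Fin d → ℤ, (fun j => (ε * (m j : ℝ)) / (ε * 2 ^ i)) = fun j => (m j : ℝ) / p := by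
    intro m; funext j; rw [mul_div_mul_left _ _ (ne_of_gt hε)]
  set g : (Fin d → ℤ) → ℝ := fun m =>
    if m ≠ 0 then ρ (fun j => (m j : ℝ) / p) ^ 2 * R (fun j => ε * (m j : ℝ)) else 0 with hg_def
  have hbody : (∑' m : Fin d → ℤ, if m ≠ 0 then
      ρ (fun j => (ε * (m j : ℝ)) / (ε * 2 ^ i)) ^ 2 * R (fun j => ε * (m j : ℝ)) else 0)
      = ∑' m, g m := by
    refine tsum_congr fun m => ?_
    rw [hg_def, harg m]
  rw [hbody]
  -- the box
  set M : ℕ := ⌈b * p⌉₊ with hM_def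
  have hbpM : b * p ≤ (M:ℝ) := Nat.le_ceil _
  have hMlt : (M:ℝ) < b * p + 1 := Nat.ceil_lt_add_one (by positivity)
  set box : Finset (Fin d → ℤ) := Fintype.piFinset fun _ => Finset.Icc (-(M:ℤ)) (M:ℤ) with hbox_def
  -- outside the box, g vanishes
  have hout : ∀ m ∉ box, g m = 0 := by
    intro m hm
    rw [hg_def]
    by_cases hm0 : m = 0
    · simp [hm0]
    · simp only [hm0, ne_eq, not_false_eq_true, if_true]
      have hρ0 : ρ (fun j => (m j : ℝ) / p) = 0 := by
        by_contra hne
        have hle := (hsupp _ hne).2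
        rw [hbox_def, Fintype.mem_piFinset] at hm
        push_neg at hm
        obtain ⟨j, hj⟩ := hm
        rw [Finset.mem_Icc] at hj
        push_neg at hj
        have habs : (M:ℝ) < |(m j : ℝ)| := by
          rcases le_or_gt (-(M:ℤ)) (m j) with h1 | h1
          · have h2 := hj h1
            have : (M:ℝ) < (m j : ℝ) := by exact_mod_cast h2
            exact this.trans_le (le_abs_self _)
          · have : (M:ℝ) < -(m j : ℝ) := by
              have : (m j : ℝ) < -(M:ℝ) := by exact_mod_cast h1
              linarith
            exact this.trans_le (neg_le_abs _)
        have hterm : b ^ 2 < ((m j : ℝ) / p) ^ 2 := by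
          rw [div_pow]
          rw [lt_div_iff₀ (by positivity)]
          have h1 : b * p < |(m j : ℝ)| := lt_of_le_of_lt hbpM habs
          calc b^2 * p^2 = (b*p)^2 := by ring
            _ < |(m j : ℝ)|^2 := pow_lt_pow_left₀ h1 (by positivity) (by norm_num)
            _ = (m j : ℝ)^2 := sq_abs _
        have hsum : ((m j : ℝ) / p) ^ 2 ≤ ∑ l, ((m l : ℝ) / p) ^ 2 :=
          Finset.single_le_sum (f := fun l => ((m l : ℝ) / p) ^ 2)
            (fun l _ => sq_nonneg _) (Finset.mem_univ j)
        linarith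
      simp [hρ0]
  -- cardinality bound
  have hcard : (box.card : ℝ) ≤ ((2*b+3) * p) ^ d := by
    have h1 : box.card = (2*M+1)^d := by
      rw [hbox_def, Fintype.card_piFinset]
      simp only [Int.card_Icc]
      rw [Finset.prod_const, Finset.card_univ, Fintype.card_fin]
      congr 1
      omega
    rw [h1]
    push_cast
    apply pow_le_pow_left₀ (by positivity)
    linarith [hMlt, hp1, mul_le_mul_of_nonneg_left hp1 (by linarith : (0:ℝ) ≤ 3)]
  -- generic per-term estimate for contributing m
  have hterm : ∀ m : Fin d → ℤ, m ≠ 0 → ρ (fun j => (m j : ℝ) / p) ≠ 0 →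
      (a * t ≤ ε * Real.sqrt (∑ l, ((m l : ℝ))^2)) ∧
      R (fun j => ε * (m j : ℝ)) =
        (ε * Real.sqrt (∑ l, ((m l : ℝ))^2)) ^ (β - (d:ℝ)) * Rt (fun j => ε * (m j : ℝ)) ∧
      a * t / q ≤ ‖(fun j => ε * (m j : ℝ))‖ := by
    intro m hm0 hρne
    set S : ℝ := ∑ l, ((m l : ℝ))^2 with hS_def
    have hSnn : 0 ≤ S := Finset.sum_nonneg fun _ _ => sq_nonneg _
    have hlow := (hsupp _ hρne).1
    have hsum_eq : ∑ l, ((m l : ℝ) / p) ^ 2 = S / p^2 := by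
      rw [hS_def, Finset.sum_div]
      congr 1; funext l; rw [div_pow]
    rw [hsum_eq] at hlow
    have hS_ge : (a*p)^2 ≤ S := by
      rw [le_div_iff₀ (by positivity)] at hlow
      calc (a*p)^2 = a^2 * p^2 := by ring
        _ ≤ S := hlow
    have hsqrt : a * p ≤ Real.sqrt S := (Real.le_sqrt (by positivity) hSnn).2 hS_ge
    have h1 : a * t ≤ ε * Real.sqrt S := by
      rw [ht_def]; calc a * (ε*p) = ε * (a*p) := by ring
        _ ≤ ε * Real.sqrt S := mul_le_mul_of_nonneg_left hsqrt hε.le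
    refine ⟨h1, ?_, ?_⟩
    · have hne : (fun j => ε * (m j : ℝ)) ≠ 0 := by
        obtain ⟨j, hj⟩ := Function.ne_iff.1 hm0
        refine Function.ne_iff.2 ⟨j, ?_⟩
        simp only [Pi.zero_apply]
        intro hc
        exact hj (by exact_mod_cast (mul_eq_zero.1 hc).resolve_left (ne_of_gt hε))
      rw [hR _ hne]
      congr 2
      rw [show ∑ l, (ε * (m l : ℝ))^2 = ε^2 * S by
        rw [hS_def, Finset.mul_sum]; congr 1; funext l; ring]
      rw [Real.sqrt_mul (sq_nonneg ε), Real.sqrt_sq hε.le]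
    · -- norm lower bound
      set x : Fin d → ℝ := fun j => ε * (m j : ℝ) with hx_def
      have hx_sum : ∑ l, (x l)^2 = ε^2 * S := by
        rw [hx_def, hS_def, Finset.mul_sum]; congr 1; funext l; ring
      have hle : ε^2 * S ≤ (d:ℝ) * ‖x‖^2 := by
        rw [← hx_sum]
        calc ∑ l, (x l)^2 ≤ ∑ l : Fin d, ‖x‖^2 := by
              apply Finset.sum_le_sum
              intro l _
              have h := norm_le_pi_norm x l
              rw [Real.norm_eq_abs] at h
              calc (x l)^2 = |x l|^2 := (sq_abs _).symm
                _ ≤ ‖x‖^2 := pow_le_pow_left₀ (abs_nonneg _) h 2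
          _ = (d:ℝ) * ‖x‖^2 := by
              rw [Finset.sum_const, Finset.card_univ, Fintype.card_fin, nsmul_eq_mul]
      have h2 : ε * Real.sqrt S ≤ q * ‖x‖ := by
        have := Real.sqrt_le_sqrt hle
        rwa [Real.sqrt_mul (sq_nonneg ε), Real.sqrt_sq hε.le,
          Real.sqrt_mul hdpos.le, Real.sqrt_sq (norm_nonneg x), ← hq_def] at this
      rw [div_le_iff₀ hq]
      calc a * t ≤ ε * Real.sqrt S := h1
        _ ≤ q * ‖x‖ := h2
        _ = ‖x‖ * q := mul_comm _ _
  -- now split on t ≤ 1 vs 1 ≤ t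
  have hpow : p ^ (2*α+κ) = (2:ℝ) ^ ((2*α+κ) * (i:ℝ)) := by
    rw [hp_def, ← Real.rpow_natCast 2 i, ← Real.rpow_mul (by norm_num : (0:ℝ) ≤ 2),
      mul_comm (i:ℝ) (2*α+κ)]
  have hgbound : ∀ (RtB : ℝ), 0 ≤ RtB →
      (∀ m : Fin d → ℤ, m ≠ 0 → ρ (fun j => (m j:ℝ)/p) ≠ 0 → Rt (fun j => ε * (m j:ℝ)) ≤ RtB) →
      ∀ m : Fin d → ℤ, g m ≤ Mρ^2 * ((a*t)^(β-(d:ℝ)) * RtB) := by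
    intro RtB hRtB hRtBle m
    have hTnn : 0 ≤ Mρ^2 * ((a*t)^(β-(d:ℝ)) * RtB) := by positivity
    simp only [hg_def]
    by_cases hm0 : m = 0
    · simpa [hm0] using hTnn
    · rw [if_pos hm0]
      by_cases hρ0 : ρ (fun j => (m j:ℝ)/p) = 0
      · rw [hρ0]; simpa using hTnn
      · obtain ⟨h1, h2, h3⟩ := hterm m hm0 hρ0
        rw [h2]
        have hrpow_le : (ε * Real.sqrt (∑ l, ((m l:ℝ))^2)) ^ (β-(d:ℝ)) ≤ (a*t) ^ (β-(d:ℝ)) :=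
          Real.rpow_le_rpow_of_nonpos (by positivity) h1 (by linarith)
        have hρle : ρ (fun j => (m j:ℝ)/p) ^ 2 ≤ Mρ^2 :=
          pow_le_pow_left₀ (hρnn _) (hMρ _) 2
        have hRtle := hRtBle m hm0 hρ0
        have h0rt := hRtnn (fun j => ε * (m j:ℝ))
        exact mul_le_mul hρle
          (mul_le_mul hrpow_le hRtle h0rt (Real.rpow_nonneg (by positivity) _))
          (mul_nonneg (Real.rpow_nonneg (by positivity) _) h0rt) (by positivity)
  have hsum_le : ∀ T : ℝ, 0 ≤ T → (∀ m, g m ≤ T) →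
      ε ^ ((d:ℝ)-2*α) * ∑' m, g m ≤ ε ^ ((d:ℝ)-2*α) * (((2*b+3)*p)^d * T) := by
    intro T hTnn hT
    apply mul_le_mul_of_nonneg_left _ (Real.rpow_nonneg hε.le _)
    rw [tsum_eq_sum hout]
    calc ∑ m ∈ box, g m ≤ box.card • T := Finset.sum_le_card_nsmul _ _ _ (fun m _ => hT m)
      _ = (box.card : ℝ) * T := nsmul_eq_mul _ _
      _ ≤ ((2*b+3)*p)^d * T := mul_le_mul_of_nonneg_right hcard hTnn
  rcases le_or_gt t 1 with hcase | hcase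
  · -- small t : use the uniform bound C0
    have hb1 := hgbound C0 (by linarith) (fun m _ _ => hC0 _)
    calc ε ^ ((d:ℝ)-2*α) * ∑' m, g m
        ≤ ε ^ ((d:ℝ)-2*α) * (((2*b+3)*p)^d * (Mρ^2 * ((a*t)^(β-(d:ℝ)) * C0))) :=
          hsum_le _ (by positivity) hb1
      _ = (ε*p)^(β-2*α+0-κ) * (K1 * (ε^κ * p^(2*α+κ))) := by
          have h1 := lp_alg d β α κ 0 ε p hε hp
          have h2 : t ^ (β-(d:ℝ)) = (ε*p) ^ (β-(d:ℝ)+0) := by rw [ht_def, add_zero]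
          rw [Real.mul_rpow ha.le ht.le, mul_pow, ← Real.rpow_natCast p d, hK1_def]
          linear_combination ((2*b+3)^d * (Mρ^2 * (a^(β-(d:ℝ)) * C0)) * ε^((d:ℝ)-2*α) * p^((d:ℝ))) * h2
            + ((2*b+3)^d * (Mρ^2 * (a^(β-(d:ℝ)) * C0))) * h1
      _ ≤ 1 * (K1 * (ε^κ * p^(2*α+κ))) :=
          mul_le_mul_of_nonneg_right (Real.rpow_le_one ht.le hcase (by linarith)) (by positivity)
      _ = K1 * p^(2*α+κ) * ε^κ := by ring
      _ ≤ (K1+K2) * p^(2*α+κ) * ε^κ :=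
          mul_le_mul_of_nonneg_right
            (mul_le_mul_of_nonneg_right (by linarith) (Real.rpow_nonneg hp.le _))
            (Real.rpow_nonneg hε.le _)
      _ = (K1+K2) * (2:ℝ)^((2*α+κ)*(i:ℝ)) * ε^κ := by rw [hpow]
  · -- large t : use the decay bound
    have hRtB2 : ∀ m : Fin d → ℤ, m ≠ 0 → ρ (fun j => (m j:ℝ)/p) ≠ 0 →
        Rt (fun j => ε * (m j:ℝ)) ≤ Cd * (q/(a*t))^d := by
      intro m hm0 hρ0
      obtain ⟨h1, h2, h3⟩ := hterm m hm0 hρ0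
      set x : Fin d → ℝ := fun j => ε * (m j:ℝ) with hx_def
      have hatq : (0:ℝ) < a*t/q := by positivity
      have hxpos : (0:ℝ) < ‖x‖ := lt_of_lt_of_le hatq h3
      have e1 : |Rt x| ≤ Cd / ‖x‖^d := by
        rw [le_div_iff₀ (by positivity)]
        calc |Rt x| * ‖x‖^d = ‖x‖^d * |Rt x| := mul_comm _ _
          _ ≤ Cd := hCd x
      have e2 : Cd / ‖x‖^d ≤ Cd / (a*t/q)^d :=
        div_le_div_of_nonneg_left (by linarith) (by positivity) (pow_le_pow_left₀ hatq.le h3 d)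
      have e3 : Cd / (a*t/q)^d = Cd * (q/(a*t))^d := by
        rw [div_pow, div_pow, div_div_eq_mul_div, mul_div_assoc]
      calc (Rt x : ℝ) ≤ |Rt x| := le_abs_self _
        _ ≤ Cd / ‖x‖^d := e1
        _ ≤ Cd / (a*t/q)^d := e2
        _ = Cd * (q/(a*t))^d := e3
    have hb2 := hgbound (Cd * (q/(a*t))^d) (by positivity) hRtB2
    calc ε ^ ((d:ℝ)-2*α) * ∑' m, g m
        ≤ ε ^ ((d:ℝ)-2*α) * (((2*b+3)*p)^d * (Mρ^2 * ((a*t)^(β-(d:ℝ)) * (Cd * (q/(a*t))^d)))) :=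
          hsum_le _ (by positivity) hb2
      _ = (ε*p)^(β-2*α+(-(d:ℝ))-κ) * (K2 * (ε^κ * p^(2*α+κ))) := by
          have h1 := lp_alg d β α κ (-(d:ℝ)) ε p hε hp
          have h3' : t^(β-(d:ℝ)) * t^(-(d:ℝ)) = (ε*p)^(β-(d:ℝ)+(-(d:ℝ))) := by
            rw [← Real.rpow_add ht, ht_def]
          have h4 : (q/(a*t))^d = (q/a)^d * t^(-(d:ℝ)) := by
            rw [Real.rpow_neg ht.le, Real.rpow_natCast, div_pow, div_pow, mul_pow,
              div_mul_eq_div_div, div_eq_mul_inv]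
          rw [h4, Real.mul_rpow ha.le ht.le, mul_pow, ← Real.rpow_natCast p d, hK2_def]
          linear_combination
            ((2*b+3)^d * (Mρ^2 * (a^(β-(d:ℝ)) * (Cd * (q/a)^d))) * ε^((d:ℝ)-2*α) * p^((d:ℝ))) * h3'
            + ((2*b+3)^d * (Mρ^2 * (a^(β-(d:ℝ)) * (Cd * (q/a)^d)))) * h1
      _ ≤ 1 * (K2 * (ε^κ * p^(2*α+κ))) :=
          mul_le_mul_of_nonneg_right
            (Real.rpow_le_one_of_one_le_of_nonpos hcase.le (by linarith)) (by positivity)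
      _ = K2 * p^(2*α+κ) * ε^κ := by ring
      _ ≤ (K1+K2) * p^(2*α+κ) * ε^κ :=
          mul_le_mul_of_nonneg_right
            (mul_le_mul_of_nonneg_right (by linarith) (Real.rpow_nonneg hp.le _))
            (Real.rpow_nonneg hε.le _)
      _ = (K1+K2) * (2:ℝ)^((2*α+κ)*(i:ℝ)) * ε^κ := by rw [hpow]
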